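/- Let $n$ be a multiple of $4$, $n \geq 4$, and fix $\epsilon_y \in \{1,3\}$ for each $y \in \{0,1\}^{d-1}$. Define $L : (\mathbb{Z}/n\mathbb{Z})^d \to \{C,A,T\}$ by: $L(x_1,\ldots,x_d) = A$ if $x_d$ is even; otherwise, letting $y \in \{0,1\}^{d-1}$ be the mod-2 reduction of $(x_1,\ldots,x_{d-1})$, set $L = C$ if $x_d \equiv \epsilon_y \pmod 4$ and $L = T$ if $x_d \equiv \epsilon_y + 2 \pmod 4$. Then the number of CAT occurrences equals $(3^{d-1}/2) n^d$. -/
import Mathlib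

open Finset

inductive Letter | C | A | T
deriving DecidableEq

section aux

variable {n : ℕ} [NeZero n]

lemma valk_add (k : ℕ) (hk : k ∣ n) (a b : ZMod n) :
    (a + b).val % k = (a.val + b.val) % k := by
  rw [ZMod.val_add, Nat.mod_mod_of_dvd _ hk]

lemma val_neg_one' (hn : 4 ≤ n) : (-1 : ZMod n).val = n - 1 := by
  have h1 : ((n - 1 : ℕ) : ZMod n) = -1 := by
    have h2 : ((n - 1 : ℕ) : ZMod n) = (n : ZMod n) - 1 := by
      push_cast [Nat.cast_sub (by omega : 1 ≤ n)]; ring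
    rw [h2, ZMod.natCast_self]; ring
  rw [← h1, ZMod.val_cast_of_lt (by omega)]

lemma val_one' (hn : 4 ≤ n) : (1 : ZMod n).val = 1 := by
  rw [← Nat.cast_one, ZMod.val_cast_of_lt (by omega)]

lemma count_mod4 (h4 : 4 ∣ n) (c : ℕ) (hc : c < 4) :
    (univ.filter (fun a : ZMod n => a.val % 4 = c)).card = n / 4 := by
  rw [show n / 4 = (Finset.range (n / 4)).card from (Finset.card_range _).symm]
  refine Finset.card_bij' (fun a _ => a.val / 4) (fun k _ => ((4 * k + c : ℕ) : ZMod n))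
    ?_ ?_ ?_ ?_
  · intro a ha
    simp only [mem_range]
    exact Nat.div_lt_div_of_lt_of_dvd h4 (ZMod.val_lt a)
  · intro k hk
    simp only [mem_range] at hk
    have hlt : 4 * k + c < n := by omega
    simp only [mem_filter, mem_univ, true_and, ZMod.val_cast_of_lt hlt]
    omega
  · intro a ha
    simp only [mem_filter, mem_univ, true_and] at ha
    have h : 4 * (a.val / 4) + c = a.val := by omega
    show ((4 * (a.val / 4) + c : ℕ) : ZMod n) = a
    rw [h]
    simp [ZMod.natCast_val, ZMod.cast_id]
  · intro k hk
    simp only [mem_range] at hk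
    have hlt : 4 * k + c < n := by omega
    show ((4 * k + c : ℕ) : ZMod n).val / 4 = k
    rw [ZMod.val_cast_of_lt hlt]
    omega

lemma count_pm (hn : 4 ≤ n) :
    (univ.filter (fun a : ZMod n => a = 1 ∨ a = -1)).card = 2 := by
  have h : (univ.filter (fun a : ZMod n => a = 1 ∨ a = -1)) = {1, -1} := by
    ext a; simp
  rw [h]
  rw [Finset.card_insert_of_notMem, Finset.card_singleton]
  simp only [mem_singleton]
  intro h1
  have h2 := congrArg ZMod.val h1
  rw [val_one' hn, val_neg_one' hn] at h2
  omega

lemma count_pi (hn : 4 ≤ n) (d : ℕ) :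
    (univ.filter (fun v : Fin d → ZMod n => ∀ j, v j = 0 ∨ v j = 1 ∨ v j = -1)).card
      = 3 ^ d := by
  have h : (univ.filter (fun v : Fin d → ZMod n => ∀ j, v j = 0 ∨ v j = 1 ∨ v j = -1))
      = Fintype.piFinset (fun _ : Fin d => ({0, 1, -1} : Finset (ZMod n))) := by
    ext v
    simp [Fintype.mem_piFinset]
  have h01 : (0 : ZMod n) ≠ 1 := by
    intro h; have h2 := congrArg ZMod.val h; rw [ZMod.val_zero, val_one' hn] at h2; omega
  have h0m : (0 : ZMod n) ≠ -1 := by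
    intro h; have h2 := congrArg ZMod.val h; rw [ZMod.val_zero, val_neg_one' hn] at h2; omega
  have h1m : (1 : ZMod n) ≠ -1 := by
    intro h; have h2 := congrArg ZMod.val h; rw [val_one' hn, val_neg_one' hn] at h2; omega
  have hcard : ({0, 1, -1} : Finset (ZMod n)).card = 3 := by
    rw [Finset.card_insert_of_notMem (by simp [h01, h0m]),
      Finset.card_insert_of_notMem (by simp [h1m]), Finset.card_singleton]
  rw [h, Fintype.card_piFinset]
  simp [hcard]

end aux

/-- Generalized Patchell–Spiro labelings: the torus `(ℤ/n)^(d+1)` is modeled as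
`(Fin d → ZMod n) × ZMod n`, the last factor being the distinguished coordinate. -/
theorem stmt_15 (n d : ℕ) [NeZero n] (hn : 4 ≤ n) (h4 : 4 ∣ n)
    (ε : (Fin d → ZMod 2) → ℕ) (hε : ∀ y, ε y = 1 ∨ ε y = 3)
    (L : (Fin d → ZMod n) × ZMod n → Letter)
    (hL : ∀ p : (Fin d → ZMod n) × ZMod n,
      L p = if p.2.val % 2 = 0 then Letter.A
            else if p.2.val % 4 = ε (fun j => ((p.1 j).val : ZMod 2)) then Letter.C
            else Letter.T) :
    ((Finset.univ.filter
        (fun q : ((Fin d → ZMod n) × ZMod n) × ((Fin d → ZMod n) × ZMod n) =>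
          (∀ j, q.2.1 j = 0 ∨ q.2.1 j = 1 ∨ q.2.1 j = -1) ∧
          (q.2.2 = 0 ∨ q.2.2 = 1 ∨ q.2.2 = -1) ∧ q.2 ≠ 0 ∧
          L q.1 = Letter.C ∧ L (q.1 + q.2) = Letter.A ∧
          L (q.1 + 2 • q.2) = Letter.T)).card : ℝ)
      = 3 ^ d * n ^ (d + 1) / 2 := by
  have h2 : (2 : ℕ) ∣ n := dvd_trans (by norm_num) h4
  have hn4 : n % 4 = 0 := by omega
  have h1ne : (1 : ZMod n) ≠ 0 := by
    intro h; have h2 := congrArg ZMod.val h; rw [val_one' hn, ZMod.val_zero] at h2; omega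
  have hmne : (-1 : ZMod n) ≠ 0 := by
    intro h; have h2 := congrArg ZMod.val h; rw [val_neg_one' hn, ZMod.val_zero] at h2; omega
  have hv2val : ∀ a : ZMod n, a = 1 ∨ a = -1 → a.val = 1 ∨ a.val = n - 1 := by
    rintro a (rfl | rfl)
    · exact Or.inl (val_one' hn)
    · exact Or.inr (val_neg_one' hn)
  have hiff : ∀ q : ((Fin d → ZMod n) × ZMod n) × ((Fin d → ZMod n) × ZMod n),
      ((∀ j, q.2.1 j = 0 ∨ q.2.1 j = 1 ∨ q.2.1 j = -1) ∧
        (q.2.2 = 0 ∨ q.2.2 = 1 ∨ q.2.2 = -1) ∧ q.2 ≠ 0 ∧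
        L q.1 = Letter.C ∧ L (q.1 + q.2) = Letter.A ∧
        L (q.1 + 2 • q.2) = Letter.T)
      ↔ ((q.1.2.val % 4 = ε (fun j => ((q.1.1 j).val : ZMod 2))) ∧
         ((∀ j, q.2.1 j = 0 ∨ q.2.1 j = 1 ∨ q.2.1 j = -1) ∧
          (q.2.2 = 1 ∨ q.2.2 = -1))) := by
    rintro ⟨⟨x1, x2⟩, v1, v2⟩
    dsimp only
    constructor
    · rintro ⟨ha, hb, hc0, hc, haa, ht⟩
      rw [hL] at hc
      by_cases he : x2.val % 2 = 0
      · rw [if_pos he] at hc; exact absurd hc (by simp)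
      rw [if_neg he] at hc
      by_cases h4e : x2.val % 4 = ε (fun j => ((x1 j).val : ZMod 2))
      · refine ⟨h4e, ha, ?_⟩
        rcases hb with rfl | hb
        · exfalso
          rw [hL] at haa
          have hsnd : ((x1, x2) + (v1, 0)).2 = x2 := by simp
          rw [hsnd, if_neg he] at haa
          split at haa <;> simp at haa
        · exact hb
      · rw [if_neg h4e] at hc; exact absurd hc (by simp)
    · rintro ⟨h4e, ha, hb⟩
      have hεy := hε (fun j => ((x1 j).val : ZMod 2))
      have hodd : x2.val % 2 = 1 := by omega
      have hv2 := hv2val v2 hb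
      refine ⟨ha, Or.inr hb, ?_, ?_, ?_, ?_⟩
      · intro h0
        have hv0 : v2 = 0 := congrArg Prod.snd h0
        rcases hb with rfl | rfl
        · exact h1ne hv0
        · exact hmne hv0
      · rw [hL]
        dsimp only
        rw [if_neg (by omega), if_pos h4e]
      · rw [hL]
        have hsnd : ((x1, x2) + (v1, v2)).2 = x2 + v2 := rfl
        have hva := valk_add 2 h2 x2 v2
        rw [hsnd, if_pos (show (x2 + v2).val % 2 = 0 by omega)]
      · rw [hL]
        have hsnd : ((x1, x2) + 2 • (v1, v2)).2 = x2 + (v2 + v2) := by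
          simp [two_nsmul, two_mul]
        rw [hsnd]
        have hv4 := valk_add 4 h4 x2 (v2 + v2)
        have hvv := valk_add 4 h4 v2 v2
        have hv2' := valk_add 2 h2 x2 (v2 + v2)
        have hvv2 := valk_add 2 h2 v2 v2
        rw [if_neg (by omega)]
        have hfst : (fun j => ((((x1, x2) + 2 • (v1, v2)).1 j).val : ZMod 2))
            = (fun j => ((x1 j).val : ZMod 2)) := by
          funext j
          have hj : ((x1, x2) + 2 • (v1, v2)).1 j = x1 j + (v1 j + v1 j) := by
            simp [two_nsmul, two_mul]
          rw [hj]
          have hA := valk_add 2 h2 (x1 j) (v1 j + v1 j)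
          have hB := valk_add 2 h2 (v1 j) (v1 j)
          have hm : (x1 j + (v1 j + v1 j)).val % 2 = (x1 j).val % 2 := by omega
          calc ((x1 j + (v1 j + v1 j)).val : ZMod 2)
              = (((x1 j + (v1 j + v1 j)).val % 2 : ℕ) : ZMod 2) := (ZMod.natCast_mod _ 2).symm
            _ = (((x1 j).val % 2 : ℕ) : ZMod 2) := by rw [hm]
            _ = ((x1 j).val : ZMod 2) := ZMod.natCast_mod _ 2
        rw [hfst, if_neg (by omega)]
  rw [Finset.filter_congr (fun q _ => hiff q)]
  rw [← Finset.univ_product_univ,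
    Finset.filter_product
      (fun p : (Fin d → ZMod n) × ZMod n =>
        p.2.val % 4 = ε fun j => ((p.1 j).val : ZMod 2))
      (fun v : (Fin d → ZMod n) × ZMod n =>
        (∀ j, v.1 j = 0 ∨ v.1 j = 1 ∨ v.1 j = -1) ∧ (v.2 = 1 ∨ v.2 = -1)),
    Finset.card_product]
  have hsndc : (univ.filter (fun v : (Fin d → ZMod n) × ZMod n =>
      (∀ j, v.1 j = 0 ∨ v.1 j = 1 ∨ v.1 j = -1) ∧ (v.2 = 1 ∨ v.2 = -1))).card = 3 ^ d * 2 := by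
    rw [← Finset.univ_product_univ,
      Finset.filter_product
        (fun w : Fin d → ZMod n => ∀ j, w j = 0 ∨ w j = 1 ∨ w j = -1)
        (fun a : ZMod n => a = 1 ∨ a = -1),
      Finset.card_product, count_pi hn d, count_pm hn]
  have hfstc : (univ.filter (fun p : (Fin d → ZMod n) × ZMod n =>
      p.2.val % 4 = ε (fun j => ((p.1 j).val : ZMod 2)))).card = n ^ d * (n / 4) := by
    rw [Finset.card_filter, Fintype.sum_prod_type]
    have hx : ∀ x : Fin d → ZMod n,
        (∑ a : ZMod n, if a.val % 4 = ε (fun j => ((x j).val : ZMod 2)) then 1 else 0)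
          = n / 4 := by
      intro x
      rw [← Finset.card_filter]
      exact count_mod4 h4 _ (by rcases hε (fun j => ((x j).val : ZMod 2)) with h | h <;> omega)
    rw [Finset.sum_congr rfl (fun x _ => hx x), Finset.sum_const, card_univ,
      Fintype.card_fun, ZMod.card, Fintype.card_fin, smul_eq_mul]
  rw [hfstc, hsndc]
  obtain ⟨m, rfl⟩ := h4
  rw [Nat.mul_div_cancel_left m (by norm_num)]
  push_cast
  ring
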